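/- arXiv:1705.10212 — 7 statements merged into one kernel-verified Lean document; each statement's English description precedes it below -/
import Mathlib

section
/- Let N be a torsion-free finitely generated nilpotent group and p a prime. If H ≤ N is a subgroup of index p^α, then N^{p^α} ⊆ H, where N^m is the subgroup generated by all m-th powers. -/
/-- Old Mathlib definition (removed): a monoid is torsion-free if every non-identity element has infinite order. -/
def Monoid.IsTorsionFree (G : Type*) [Monoid G] : Prop :=
  ∀ g : G, g ≠ 1 → ¬IsOfFinOrder g

/-!
Climb from `H` to `G` along normalizers: the normalizer condition makes `H` a proper normal
subgroup of its normalizer `K`, so `K` has smaller index and, by induction, `g ^ K.index ∈ K`;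
normality of `H` in `K` then puts `(g ^ K.index) ^ H.relIndex K = g ^ H.index` in `H`.
-/

namespace Subgroup

variable {G : Type*} [Group G]

theorem pow_relIndex_normalizer_mem {H : Subgroup G} {g : G} (hg : g ∈ normalizer (H : Set G)) :
    g ^ H.relIndex (normalizer H) ∈ H :=
  mem_subgroupOf.mp (pow_index_mem (H.subgroupOf (normalizer H)) ⟨g, hg⟩)

theorem index_normalizer_lt (hG : NormalizerCondition G) {H : Subgroup G} (hH : H ≠ ⊤)
    (h0 : H.index ≠ 0) : (normalizer (H : Set G)).index < H.index := by
  have hlt : H < normalizer H := hG H (lt_top_iff_ne_top.mpr hH)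
  have hmul := relIndex_mul_index hlt.le
  have hrel : H.relIndex (normalizer H) ≠ 1 := fun h => hlt.not_ge (relIndex_eq_one.mp h)
  have hK : (normalizer (H : Set G)).index ≠ 0 := fun h => h0 (by rw [← hmul, h, mul_zero])
  have hrel0 : H.relIndex (normalizer H) ≠ 0 := fun h => h0 (by rw [← hmul, h, zero_mul])
  rw [← hmul]
  exact (Nat.lt_mul_iff_one_lt_left (Nat.pos_of_ne_zero hK)).mpr (by omega)

theorem _root_.NormalizerCondition.pow_index_mem (hG : NormalizerCondition G)
    (H : Subgroup G) (g : G) : g ^ H.index ∈ H := by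
  induction hn : H.index using Nat.strong_induction_on generalizing H with
  | _ n ih =>
    subst hn
    by_cases hH : H = ⊤
    · simp [hH]
    by_cases h0 : H.index = 0
    · simp [h0]
    have hK : g ^ (normalizer (H : Set G)).index ∈ normalizer (H : Set G) :=
      ih _ (index_normalizer_lt hG hH h0) _ rfl
    rw [← relIndex_mul_index (le_normalizer (H := H)), mul_comm, pow_mul]
    exact pow_relIndex_normalizer_mem hK

end Subgroup

theorem power_subgroup_le_of_prime_power_index_general (N : Type*) [Group N]
    [Group.IsNilpotent N] (p : ℕ) (α : ℕ) (H : Subgroup N) (hind : H.index = p ^ α) :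
    Subgroup.closure {x : N | ∃ g : N, x = g ^ (p ^ α)} ≤ H := by
  rw [Subgroup.closure_le]
  rintro _ ⟨g, rfl⟩
  rw [← hind]
  exact Group.normalizerCondition_of_isNilpotent.pow_index_mem H g

theorem power_subgroup_le_of_prime_power_index (N : Type*) [Group N]
    [Group.IsNilpotent N] (hfg : Group.FG N) (htf : Monoid.IsTorsionFree N)
    (p : ℕ) (hp : p.Prime) (α : ℕ) (H : Subgroup N) (hind : H.index = p ^ α) :
    Subgroup.closure {x : N | ∃ g : N, x = g ^ (p ^ α)} ≤ H :=
  power_subgroup_le_of_prime_power_index_general N p α H hind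
end

section
/- Let N be a torsion-free finitely generated nilpotent group and H ≤ N a subgroup. Then the isolator √[N]{H} = { x ∈ N : ∃ k ≥ 1, x^k ∈ H } is a subgroup of N. -/
/-!
The subgroup generated by the isolator of `H` is nilpotent and generated by elements having a power
in `H`, so it suffices to show that in a nilpotent group generated by such elements every element
has a power in `H`. Induct on the nilpotency class `c`, with `L = γ_c` the last nontrivial term of
the lower central series, which is central: modulo `L` every element has a power in `H ⊔ L`. The
commutator map is bilinear on `γ_{c-1} × G` with central values, so
`⁅u, q⁆ ^ (a * b) = ⁅u ^ a, q ^ b⁆`, which lies in `H` when `u ^ a` and `q ^ b` lie in `H` up to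
central factors. So `L` is generated by central elements having a power in `H`, hence all of its
elements have one, and then so does every element of `H ⊔ L`.
-/

open Subgroup
open scoped commutatorElement

section Commutator

variable {G : Type*} [Group G] {u q z : G}

theorem commutatorElement_mul_left_of_mem_center (hz : z ∈ center G) :
    ⁅u * z, q⁆ = ⁅u, q⁆ := by
  rw [commutatorElement_mul_left_eq_conj_mul,
    Commute.commutator_eq (mem_center_iff.mp hz q).symm, mul_one, mul_inv_cancel, one_mul]

theorem commutatorElement_mul_right_of_mem_center (hz : z ∈ center G) :
    ⁅u, q * z⁆ = ⁅u, q⁆ := by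
  rw [commutatorElement_mul_right_eq_mul_conj,
    Commute.commutator_eq (mem_center_iff.mp hz u), mul_one, mul_inv_cancel_right]

theorem commutatorElement_pow_left (h : Commute u ⁅u, q⁆) (n : ℕ) :
    ⁅u ^ n, q⁆ = ⁅u, q⁆ ^ n := by
  induction n with
  | zero => simp
  | succ n ih =>
    rw [pow_succ, commutatorElement_mul_left_eq_conj_mul, ih, (h.pow_left n).eq,
      mul_inv_cancel_right, pow_succ']

theorem commutatorElement_pow_right (h : Commute q ⁅u, q⁆) (n : ℕ) :
    ⁅u, q ^ n⁆ = ⁅u, q⁆ ^ n := by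
  induction n with
  | zero => simp
  | succ n ih =>
    rw [pow_succ', commutatorElement_mul_right_eq_mul_conj, ih, mul_assoc _ q,
      (h.pow_right n).eq, ← mul_assoc, mul_inv_cancel_right, pow_succ']

end Commutator

namespace Subgroup

variable {G G' : Type*} [Group G] [Group G']

def isolator (H : Subgroup G) : Set G := {x | ∃ k : ℕ, 0 < k ∧ x ^ k ∈ H}

section Isolator

variable {H K : Subgroup G} {x y : G}

theorem mem_isolator : x ∈ H.isolator ↔ ∃ k : ℕ, 0 < k ∧ x ^ k ∈ H := Iff.rfl

theorem isolator_mono (h : H ≤ K) : H.isolator ⊆ K.isolator :=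
  fun _ ⟨k, hk, hx⟩ => ⟨k, hk, h hx⟩

theorem subset_isolator : (H : Set G) ⊆ H.isolator :=
  fun x hx => ⟨1, one_pos, by rwa [pow_one]⟩

theorem inv_mem_isolator (hx : x ∈ H.isolator) : x⁻¹ ∈ H.isolator := by
  obtain ⟨k, hk, hxk⟩ := hx
  exact ⟨k, hk, by rw [inv_pow]; exact H.inv_mem hxk⟩

theorem mem_isolator_of_pow_mem_isolator {n : ℕ} (hn : 0 < n) (hx : x ^ n ∈ H.isolator) :
    x ∈ H.isolator := by
  obtain ⟨k, hk, hxk⟩ := hx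
  exact ⟨n * k, Nat.mul_pos hn hk, by rwa [pow_mul]⟩

theorem mul_mem_isolator_of_commute (hxy : Commute x y) (hx : x ∈ H.isolator)
    (hy : y ∈ H.isolator) : x * y ∈ H.isolator := by
  obtain ⟨k, hk, hxk⟩ := hx
  obtain ⟨l, hl, hyl⟩ := hy
  refine ⟨k * l, Nat.mul_pos hk hl, ?_⟩
  rw [hxy.mul_pow, pow_mul, mul_comm k l, pow_mul]
  exact H.mul_mem (H.pow_mem hxk l) (H.pow_mem hyl k)

theorem preimage_isolator (f : G →* G') (H' : Subgroup G') :
    f ⁻¹' H'.isolator = (H'.comap f).isolator := by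
  ext x
  simp only [Set.mem_preimage, mem_isolator, mem_comap, map_pow]

theorem closure_subset_isolator {S : Set G} (hSH : S ⊆ H.isolator) (hSc : S ⊆ center G) :
    (closure S : Set G) ⊆ H.isolator := by
  have hc : closure S ≤ center G := (closure_le _).mpr hSc
  intro x hx
  induction hx using closure_induction with
  | mem x hx => exact hSH hx
  | one => exact subset_isolator H.one_mem
  | mul x y hx _ ihx ihy =>
    exact mul_mem_isolator_of_commute (mem_center_iff.mp (hc hx) y).symm ihx ihy
  | inv x _ ih => exact inv_mem_isolator ih

theorem isolator_sup_subset {L : Subgroup G} [L.Normal] (hLc : L ≤ center G)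
    (hLH : (L : Set G) ⊆ H.isolator) : (H ⊔ L).isolator ⊆ H.isolator := by
  rintro x ⟨k, hk, hxk⟩
  obtain ⟨h, hh, z, hz, hhz⟩ := mem_sup_of_normal_right.mp hxk
  refine mem_isolator_of_pow_mem_isolator hk ?_
  rw [← hhz]
  exact mul_mem_isolator_of_commute (mem_center_iff.mp (hLc hz) h) (subset_isolator hh) (hLH hz)

theorem commutatorElement_mem_isolator {u q : G} (hc : ⁅u, q⁆ ∈ center G)
    (hu : u ∈ (H ⊔ center G).isolator) (hq : q ∈ (H ⊔ center G).isolator) :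
    ⁅u, q⁆ ∈ H.isolator := by
  obtain ⟨a, ha, hua⟩ := hu
  obtain ⟨b, hb, hqb⟩ := hq
  obtain ⟨h, hh, z, hz, hhz⟩ := mem_sup_of_normal_right.mp hua
  obtain ⟨h', hh', z', hz', hhz'⟩ := mem_sup_of_normal_right.mp hqb
  have hcomm : ⁅h, q⁆ = ⁅u, q⁆ ^ a := by
    rw [← commutatorElement_pow_left (mem_center_iff.mp hc u) a, ← hhz,
      commutatorElement_mul_left_of_mem_center hz]
  have hcomm_center : ⁅h, q⁆ ∈ center G := hcomm ▸ pow_mem hc a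
  have key : ⁅u, q⁆ ^ (a * b) = ⁅h, h'⁆ := by
    rw [pow_mul, ← hcomm, ← commutatorElement_pow_right (mem_center_iff.mp hcomm_center q) b,
      ← hhz', commutatorElement_mul_right_of_mem_center hz']
  refine ⟨a * b, Nat.mul_pos ha hb, ?_⟩
  rw [key, commutatorElement_def]
  exact H.mul_mem (H.mul_mem (H.mul_mem hh hh') (H.inv_mem hh)) (H.inv_mem hh')

end Isolator

theorem lowerCentralSeries_quotient_eq_bot (n : ℕ) :
    lowerCentralSeries (⊤ : Subgroup (G ⧸ lowerCentralSeries (⊤ : Subgroup G) n)) n = ⊥ := by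
  set L := lowerCentralSeries (⊤ : Subgroup G) n
  have hmap := map_lowerCentralSeries ⊤ (QuotientGroup.mk' L) n
  rw [map_top_of_surjective _ (QuotientGroup.mk'_surjective L)] at hmap
  rw [← hmap, map_eq_bot_iff, QuotientGroup.ker_mk']

theorem coe_lowerCentralSeries_succ_subset_isolator {H : Subgroup G} {n : ℕ}
    (hn : lowerCentralSeries (⊤ : Subgroup G) (n + 1) ≤ center G)
    (hH : (H ⊔ center G).isolator = Set.univ) :
    (lowerCentralSeries (⊤ : Subgroup G) (n + 1) : Set G) ⊆ H.isolator := by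
  have hgen : {x : G | ∃ p ∈ lowerCentralSeries (⊤ : Subgroup G) n,
      ∃ q ∈ (⊤ : Subgroup G), ⁅p, q⁆ = x} ⊆ center G := by
    rintro _ ⟨p, hp, q, hq, rfl⟩
    exact hn (commutator_mem_commutator hp hq)
  refine closure_subset_isolator ?_ hgen
  rintro _ ⟨p, hp, q, hq, rfl⟩
  exact commutatorElement_mem_isolator (hgen ⟨p, hp, q, hq, rfl⟩)
    (hH ▸ Set.mem_univ p) (hH ▸ Set.mem_univ q)

theorem isolator_eq_univ_of_lowerCentralSeries_eq_bot {c : ℕ}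
    (hc : lowerCentralSeries (⊤ : Subgroup G) c = ⊥) {H : Subgroup G} {S : Set G}
    (hS : closure S = ⊤) (hSH : S ⊆ H.isolator) : H.isolator = Set.univ := by
  induction c generalizing G with
  | zero =>
    refine Set.eq_univ_of_forall fun x => subset_isolator ?_
    have hx : x ∈ (⊥ : Subgroup G) := hc ▸ mem_top x
    rw [mem_bot.mp hx]
    exact H.one_mem
  | succ c ih =>
    set L := lowerCentralSeries (⊤ : Subgroup G) c
    have hLc : L ≤ center G := commutator_top_right_eq_bot_iff_le_center.mp hc
    set π := QuotientGroup.mk' L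
    have hπ : Function.Surjective π := QuotientGroup.mk'_surjective L
    have hpre : π ⁻¹' (H.map π).isolator = (H ⊔ L).isolator := by
      rw [preimage_isolator, comap_map_eq, QuotientGroup.ker_mk']
    have hHL : (H ⊔ L).isolator = Set.univ := by
      have hquot := ih (lowerCentralSeries_quotient_eq_bot c) (H := H.map π) (S := π '' S)
        (by rw [← MonoidHom.map_closure, hS, map_top_of_surjective π hπ])
        (Set.image_subset_iff.mpr (hpre ▸ hSH.trans (isolator_mono le_sup_left)))
      rw [← hpre, hquot, Set.preimage_univ]
    have hLH : (L : Set G) ⊆ H.isolator := by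
      cases c with
      | zero =>
        have hSc : S ⊆ center G := subset_closure.trans (hS ▸ hLc : closure S ≤ center G)
        simpa [L, hS] using closure_subset_isolator hSH hSc
      | succ d =>
        exact coe_lowerCentralSeries_succ_subset_isolator hLc
          (Set.eq_univ_of_univ_subset (hHL ▸ isolator_mono (sup_le_sup_left hLc H)))
    exact Set.eq_univ_of_univ_subset (hHL ▸ isolator_sup_subset hLc hLH)

theorem coe_closure_isolator [Group.IsNilpotent G] (H : Subgroup G) :
    (closure H.isolator : Set G) = H.isolator := by
  refine subset_antisymm (fun x hx => ?_) subset_closure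
  set K := closure H.isolator
  obtain ⟨c, hc⟩ := nilpotent_iff_lowerCentralSeries.mp (inferInstance : Group.IsNilpotent K)
  have hK := isolator_eq_univ_of_lowerCentralSeries_eq_bot hc (H := H.comap K.subtype)
    (S := K.subtype ⁻¹' H.isolator) closure_closure_coe_preimage (preimage_isolator _ _).subset
  rw [← preimage_isolator] at hK
  exact hK.symm.subset (Set.mem_univ (⟨x, hx⟩ : K))

end Subgroup

theorem isolator_is_subgroup_general (N : Type*) [Group N] [Group.IsNilpotent N]
    (H : Subgroup N) :
    ∃ K : Subgroup N, ∀ x : N, x ∈ K ↔ ∃ k : ℕ, 0 < k ∧ x ^ k ∈ H :=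
  ⟨closure H.isolator, fun x => by rw [← SetLike.mem_coe, coe_closure_isolator]; rfl⟩

theorem isolator_is_subgroup (N : Type*) [Group N] [Group.IsNilpotent N]
    (hfg : Group.FG N) (htf : Monoid.IsTorsionFree N) (H : Subgroup N) :
    ∃ K : Subgroup N, ∀ x : N, x ∈ K ↔ ∃ k : ℕ, 0 < k ∧ x ^ k ∈ H :=
  isolator_is_subgroup_general N H
end

section
/- Let p be a prime and φ : A → B a homomorphism of abelian groups with B finitely generated, such that φ(A) has finite index d in its isolator √[B]{φ(A)}. If b ∈ φ(A) ∩ p^{k + v_p(d)}·B for some k ≥ 0, then there exists a ∈ p^k·A with φ(a) = b, where v_p(d) is the p-adic valuation of d. -/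
/-!
Write `b = p ^ (k + v) • c` with `v = v_p d`. Then `c` lies in the isolator, so `d • c ∈ φ(A)`
because the index annihilates the quotient. Together with `p ^ (k + v) • c = b ∈ φ(A)` this gives
`gcd (d, p ^ (k + v)) • c = p ^ v • c ∈ φ(A)`, and any preimage `a` of `p ^ v • c` has
`φ (p ^ k • a) = b`.
-/

theorem AddSubgroup.gcd_nsmul_mem {G : Type*} [AddCommGroup G] {H : AddSubgroup G} {x : G}
    {m n : ℕ} (hm : m • x ∈ H) (hn : n • x ∈ H) : m.gcd n • x ∈ H := by
  simp only [← QuotientAddGroup.eq_zero_iff, QuotientAddGroup.mk_nsmul] at hm hn ⊢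
  exact gcd_nsmul_eq_zero.2 ⟨hm, hn⟩

theorem Nat.gcd_pow_add_factorization {p d : ℕ} (hp : p.Prime) (hd : d ≠ 0) (k : ℕ) :
    d.gcd (p ^ (k + d.factorization p)) = p ^ d.factorization p := by
  have hcop : (d / p ^ d.factorization p).Coprime (p ^ k) :=
    ((Nat.coprime_ordCompl hp hd).pow_left k).symm
  calc d.gcd (p ^ (k + d.factorization p))
      = (p ^ d.factorization p * (d / p ^ d.factorization p)).gcd
          (p ^ d.factorization p * p ^ k) := by
        rw [Nat.ordProj_mul_ordCompl_eq_self, pow_add, mul_comm]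
    _ = p ^ d.factorization p := by rw [Nat.gcd_mul_left, hcop, mul_one]

theorem preimage_power_lemma_abelian_general (A B : Type*) [AddCommGroup A] [AddCommGroup B]
    (p : ℕ) (hp : p.Prime) (φ : A →+ B)
    (I : AddSubgroup B)
    (hI : ∀ b : B, b ∈ I ↔ ∃ n : ℕ, 0 < n ∧ n • b ∈ φ.range)
    (d : ℕ) (hd : φ.range.relIndex I = d) (hdpos : 0 < d) :
    ∀ (k : ℕ) (b : B), b ∈ φ.range →
      (∃ c : B, b = p ^ (k + d.factorization p) • c) →
      ∃ a : A, φ (p ^ k • a) = b := by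
  rintro k _ hb ⟨c, rfl⟩
  have hcI : c ∈ I := (hI c).2 ⟨_, pow_pos hp.pos _, hb⟩
  have hdc : d • c ∈ φ.range := hd ▸ φ.range.nsmul_relIndex_mem hcI
  obtain ⟨a, ha⟩ : p ^ d.factorization p • c ∈ φ.range :=
    Nat.gcd_pow_add_factorization hp hdpos.ne' k ▸ AddSubgroup.gcd_nsmul_mem hdc hb
  exact ⟨a, by rw [map_nsmul, ha, ← mul_nsmul', pow_add]⟩

theorem preimage_power_lemma_abelian (A B : Type*) [AddCommGroup A] [AddCommGroup B]
    (hfg : AddGroup.FG B) (p : ℕ) (hp : p.Prime) (φ : A →+ B)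
    (I : AddSubgroup B)
    (hI : ∀ b : B, b ∈ I ↔ ∃ n : ℕ, 0 < n ∧ n • b ∈ φ.range)
    (d : ℕ) (hd : φ.range.relIndex I = d) (hdpos : 0 < d) :
    ∀ (k : ℕ) (b : B), b ∈ φ.range →
      (∃ c : B, b = p ^ (k + d.factorization p) • c) →
      ∃ a : A, φ (p ^ k • a) = b :=
  preimage_power_lemma_abelian_general A B p hp φ I hI d hd hdpos
end

section
/- For every finitely generated abelian group A with finite generating set S, there is a constant C > 0 such that every subgroup H ≤ A satisfies det(H) ≤ C·(‖H‖_S)^{rank(H)}, where det(H) = [√[A]{H} : H] and ‖H‖_S is the minimal bound on word lengths of a generating set for H. -/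
open scoped TensorProduct

variable {A : Type*} [AddCommGroup A]

/-- Word length of `x` with respect to a generating set `S` (inverses allowed). -/
noncomputable def wordLength (S : Set A) (x : A) : ℕ :=
  sInf {n | ∃ l : List A, (∀ g ∈ l, g ∈ S ∨ -g ∈ S) ∧ l.length = n ∧ l.sum = x}

/-- The norm `‖H‖_S` of a subgroup: the minimal bound on the word lengths of the
elements of a finite generating set of `H`. -/
noncomputable def subgroupNorm (S : Set A) (H : AddSubgroup A) : ℕ :=
  sInf {m | ∃ X : Finset A, AddSubgroup.closure ↑X = H ∧ ∀ x ∈ X, wordLength S x ≤ m}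

/-- The isolator `√[A]{H}` of a subgroup `H` of an abelian group. -/
def isolator (H : AddSubgroup A) : AddSubgroup A where
  carrier := {x | ∃ n : ℕ, 0 < n ∧ n • x ∈ H}
  zero_mem' := ⟨1, one_pos, by simpa using H.zero_mem⟩
  add_mem' := by
    rintro x y ⟨n, hn, hx⟩ ⟨m, hm, hy⟩
    refine ⟨n * m, Nat.mul_pos hn hm, ?_⟩
    rw [smul_add]
    exact H.add_mem (by rw [mul_comm, mul_smul]; exact AddSubgroup.nsmul_mem H hx m)
      (by rw [mul_smul]; exact AddSubgroup.nsmul_mem H hy n)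
  neg_mem' := by
    rintro x ⟨n, hn, hx⟩
    exact ⟨n, hn, by rw [smul_neg]; exact H.neg_mem hx⟩

/-- `det(H) = [√[A]{H} : H]`. -/
noncomputable def subgroupDet (H : AddSubgroup A) : ℕ := H.relIndex (isolator H)

/-- The torsion-free rank of a subgroup. -/
noncomputable def subgroupRank (H : AddSubgroup A) : ℕ :=
  Module.finrank ℚ (ℚ ⊗[ℤ] ↥H)

/-!
Map `A` to `ℤⁿ` by a homomorphism `π` whose kernel is the finite torsion subgroup `T`. As `T`
lies in every isolator, `det H ≤ |T| · det (π H)`. If `H` is generated by a set `X` of word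
length at most `m`, the vectors `π x` (`x ∈ X`) have entries bounded by `c m`. Choose `r ≤ rank H`
of them forming a `ℚ`-basis of the span of `π H`, and `r` coordinates on which their minor `D` is
nonsingular. Projecting onto these coordinates is injective on the isolator of `π H`, and the
image of `π H` contains the columns of `D`, so `det (π H) ≤ [ℤʳ : image of π H] ≤ |det D|`, which
the Leibniz formula bounds by `r! (c m)ʳ`.
-/

open Module
open scoped Nat

section WordLength

variable {S : Set A} {x : A}

theorem exists_list_sum_eq_of_mem_closure (hx : x ∈ AddSubgroup.closure S) :
    ∃ l : List A, (∀ g ∈ l, g ∈ S ∨ -g ∈ S) ∧ l.sum = x := by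
  rw [← AddSubgroup.mem_toAddSubmonoid, AddSubgroup.closure_toAddSubmonoid] at hx
  simpa only [Set.mem_union, Set.mem_neg] using AddSubmonoid.exists_list_of_mem_closure hx

theorem exists_list_length_eq_wordLength (hx : x ∈ AddSubgroup.closure S) :
    ∃ l : List A, (∀ g ∈ l, g ∈ S ∨ -g ∈ S) ∧ l.length = wordLength S x ∧ l.sum = x := by
  obtain ⟨l, hlS, hlx⟩ := exists_list_sum_eq_of_mem_closure hx
  exact Nat.sInf_mem
    (s := {n | ∃ l : List A, (∀ g ∈ l, g ∈ S ∨ -g ∈ S) ∧ l.length = n ∧ l.sum = x})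
    ⟨l.length, l, hlS, rfl, hlx⟩

theorem eq_zero_of_wordLength_eq_zero (hx : x ∈ AddSubgroup.closure S) (h : wordLength S x = 0) :
    x = 0 := by
  obtain ⟨l, -, hl, rfl⟩ := exists_list_length_eq_wordLength hx
  rw [List.eq_nil_of_length_eq_zero (hl.trans h), List.sum_nil]

theorem natAbs_le_wordLength_mul (f : A →+ ℤ) {c : ℕ} (hc : ∀ s ∈ S, (f s).natAbs ≤ c)
    (hx : x ∈ AddSubgroup.closure S) : (f x).natAbs ≤ c * wordLength S x := by
  obtain ⟨l, hlS, hl, rfl⟩ := exists_list_length_eq_wordLength hx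
  rw [← hl]
  clear hl hx
  induction l with
  | nil => simp
  | cons g l ih =>
    have hg : (f g).natAbs ≤ c := by
      rcases hlS g List.mem_cons_self with hg | hg
      · exact hc g hg
      · simpa only [map_neg, Int.natAbs_neg] using hc _ hg
    calc (f (g :: l).sum).natAbs ≤ (f g).natAbs + (f l.sum).natAbs := by
          rw [List.sum_cons, map_add]; exact Int.natAbs_add_le _ _
      _ ≤ c + c * l.length := add_le_add hg (ih fun g' hg' => hlS g' (List.mem_cons_of_mem _ hg'))
      _ = c * (g :: l).length := by rw [List.length_cons]; ring

theorem exists_finset_closure_eq_forall_wordLength_le {H : AddSubgroup A} (hH : H.FG) :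
    ∃ X : Finset A, AddSubgroup.closure (X : Set A) = H ∧
      ∀ x ∈ X, wordLength S x ≤ subgroupNorm S H := by
  obtain ⟨X, hX⟩ := hH
  exact Nat.sInf_mem
    (s := {m | ∃ X : Finset A, AddSubgroup.closure ↑X = H ∧ ∀ x ∈ X, wordLength S x ≤ m})
    ⟨X.sup (wordLength S), X, hX, fun x hx => Finset.le_sup hx⟩

end WordLength

section Isolator

variable {G : Type*} [AddCommGroup G]

theorem le_isolator (H : AddSubgroup A) : H ≤ isolator H :=
  fun x hx => ⟨1, one_pos, by rwa [one_smul]⟩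

theorem map_isolator_le (f : A →+ G) (H : AddSubgroup A) :
    (isolator H).map f ≤ isolator (H.map f) := by
  rintro _ ⟨x, ⟨n, hn, hnx⟩, rfl⟩
  exact ⟨n, hn, by rw [← map_nsmul]; exact AddSubgroup.mem_map_of_mem f hnx⟩

theorem le_isolator_of_finite (K : AddSubgroup A) [Finite K] (H : AddSubgroup A) :
    K ≤ isolator H := by
  intro x hx
  refine ⟨addOrderOf (⟨x, hx⟩ : K), addOrderOf_pos _, ?_⟩
  have := congrArg Subtype.val (addOrderOf_nsmul_eq_zero (⟨x, hx⟩ : K))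
  rw [AddSubgroup.coe_nsmul] at this
  exact this ▸ H.zero_mem

theorem map_mem_of_mem_isolator {V : Type*} [AddCommGroup V] [Module ℚ V] (f : A →+ V)
    {L : AddSubgroup A} {W : Submodule ℚ V} (hLW : ∀ x ∈ L, f x ∈ W) {x : A}
    (hx : x ∈ isolator L) : f x ∈ W := by
  obtain ⟨n, hn, hnx⟩ := hx
  have := W.smul_mem (n : ℚ)⁻¹ (hLW _ hnx)
  rwa [map_nsmul, ← Nat.cast_smul_eq_nsmul ℚ, smul_smul,
    inv_mul_cancel₀ (by exact_mod_cast hn.ne'), one_smul] at this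

theorem AddSubgroup.fg_of_moduleFinite [Module.Finite ℤ A] (K : AddSubgroup A) : K.FG := by
  have := isNoetherian_of_isNoetherianRing_of_finite ℤ A
  simpa only [AddSubgroup.toIntSubmodule_toAddSubgroup] using
    (Submodule.fg_iff_addSubgroup_fg K.toIntSubmodule).mp (IsNoetherian.noetherian _)

theorem subgroupDet_ne_zero [Module.Finite ℤ A] (H : AddSubgroup A) : subgroupDet H ≠ 0 := by
  have : AddGroup.FG (isolator H) :=
    (AddGroup.fg_iff_addSubgroup_fg _).mpr ((isolator H).fg_of_moduleFinite)
  have : Finite (isolator H ⧸ H.addSubgroupOf (isolator H)) := by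
    refine AddCommGroup.finite_of_fg_isAddTorsion _ fun q => ?_
    induction q using QuotientAddGroup.induction_on with | H x => ?_
    obtain ⟨n, hn, hnx⟩ := x.2
    refine isOfFinAddOrder_iff_nsmul_eq_zero.mpr ⟨n, hn, ?_⟩
    rw [← QuotientAddGroup.mk_nsmul, QuotientAddGroup.eq_zero_iff]
    exact hnx
  exact Nat.card_pos.ne'

theorem subgroupDet_le_card_ker_mul (f : A →+ G) [Finite f.ker] (H : AddSubgroup A)
    (hf : subgroupDet (H.map f) ≠ 0) :
    subgroupDet H ≤ Nat.card f.ker * subgroupDet (H.map f) := by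
  have hker : f.ker ≤ isolator H := le_isolator_of_finite f.ker H
  have hsup : H ⊔ f.ker ≤ isolator H := sup_le (le_isolator H) hker
  calc subgroupDet H = H.relIndex (H ⊔ f.ker) * (H ⊔ f.ker).relIndex (isolator H) :=
        (AddSubgroup.relIndex_mul_relIndex H _ _ le_sup_left hsup).symm
    _ = H.relIndex f.ker * (H.map f).relIndex ((isolator H).map f) := by
        rw [AddSubgroup.relIndex_map_map, sup_eq_left.mpr hker, sup_comm,
          AddSubgroup.relIndex_sup_right]
    _ ≤ Nat.card f.ker * subgroupDet (H.map f) := by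
        gcongr
        · exact Nat.le_of_dvd Nat.card_pos (AddSubgroup.relIndex_dvd_card _ _)
        · exact AddSubgroup.relIndex_le_of_le_right (map_isolator_le f H) hf

end Isolator

section Rank

open TensorProduct

theorem card_le_finrank_rat_tensor {M V : Type*} [AddCommGroup M] [Module.Finite ℤ M]
    [AddCommGroup V] [Module ℚ V] (f : M →+ V) {κ : Type*} [Fintype κ] (x : κ → M)
    (hx : LinearIndependent ℚ (f ∘ x)) : Fintype.card κ ≤ finrank ℚ (ℚ ⊗[ℤ] M) := by
  let g : ℚ ⊗[ℤ] M →ₗ[ℚ] V := LinearMap.liftBaseChange ℚ f.toIntLinearMap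
  have hgx : g ∘ (fun j => (1 : ℚ) ⊗ₜ[ℤ] x j) = f ∘ x := by
    funext j
    simp [g]
  exact (LinearIndependent.of_comp g (hgx ▸ hx)).fintype_card_le_finrank

theorem subgroupRank_bot : subgroupRank (⊥ : AddSubgroup A) = 0 := by
  rw [subgroupRank, Module.finrank_baseChange]
  exact finrank_zero_of_subsingleton

end Rank

section Lattice

open Matrix

theorem Matrix.exists_submatrix_det_ne_zero {K m n : Type*} [Field K] [Fintype m] [Fintype n]
    [DecidableEq n] (M : Matrix m n K) (hM : LinearIndependent K M.col) :
    ∃ k : n → m, (M.submatrix k id).det ≠ 0 := by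
  have hrows : Submodule.span K (Set.range M.row) = ⊤ := by
    apply Submodule.eq_top_of_finrank_eq
    rw [← rank_eq_finrank_span_row, ← rank_transpose, finrank_fintype_fun_eq_card]
    exact LinearIndependent.rank_matrix (M := Mᵀ) hM
  obtain ⟨κ, a, ha, hspan, hind⟩ := exists_linearIndependent' K M.row
  have : Finite κ := Finite.of_injective a ha
  have : Fintype κ := Fintype.ofFinite κ
  have hcard : Fintype.card n = Fintype.card κ := by
    rw [linearIndependent_iff_card_eq_finrank_span.mp hind, Set.finrank, hspan, hrows, finrank_top,
      finrank_fintype_fun_eq_card]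
  let e := Fintype.equivOfCardEq hcard
  have : IsUnit (M.submatrix (a ∘ e) id) :=
    linearIndependent_rows_iff_isUnit.mp (hind.comp e e.injective)
  exact ⟨a ∘ e, ((isUnit_iff_isUnit_det _).mp this).ne_zero⟩

theorem Matrix.eq_zero_of_mem_span_col_of_comp_eq_zero {K m n : Type*} [Field K] [Fintype n]
    [DecidableEq n] (M : Matrix m n K) {k : n → m} (hk : (M.submatrix k id).det ≠ 0) {y : m → K}
    (hy : y ∈ Submodule.span K (Set.range M.col)) (hyk : y ∘ k = 0) : y = 0 := by
  rw [← range_mulVecLin] at hy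
  obtain ⟨c, rfl⟩ := hy
  rw [eq_zero_of_mulVec_eq_zero hk hyk, map_zero]

theorem Matrix.natAbs_det_le {n : Type*} [Fintype n] [DecidableEq n] (D : Matrix n n ℤ) {B : ℕ}
    (hB : ∀ i j, (D i j).natAbs ≤ B) :
    D.det.natAbs ≤ (Fintype.card n)! * B ^ Fintype.card n := by
  have := det_le (abv := AbsoluteValue.abs) (x := (B : ℤ)) fun i j => by
    change |D i j| ≤ (B : ℤ)
    rw [Int.abs_eq_natAbs]
    exact_mod_cast hB i j
  rw [nsmul_eq_mul] at this
  exact_mod_cast (Int.natCast_natAbs _).trans_le this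

theorem AddSubgroup.index_dvd_natAbs_det {n : Type*} [Fintype n] [DecidableEq n]
    (D : Matrix n n ℤ) (hD : D.det ≠ 0) {K : AddSubgroup (n → ℤ)}
    (hK : ∀ j, D.col j ∈ K) : K.index ∣ D.det.natAbs := by
  have hrange : (LinearMap.range D.mulVecLin).toAddSubgroup ≤ K := by
    rw [range_mulVecLin]
    exact Submodule.span_le (p := K.toIntSubmodule).mpr (Set.range_subset_iff.mpr hK)
  have hindex : (LinearMap.range D.mulVecLin).toAddSubgroup.index =
      (LinearMap.det D.mulVecLin).natAbs :=
    (Submodule.natAbs_det_equiv (LinearMap.range D.mulVecLin)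
      (LinearEquiv.ofInjective _ (mulVec_injective_of_det_ne_zero hD))).symm
  rw [← toLin'_apply', LinearMap.det_toLin'] at hindex
  exact hindex ▸ AddSubgroup.index_dvd_of_le hrange

theorem AddSubgroup.relIndex_le_index_map {G G' : Type*} [AddCommGroup G] [AddGroup G']
    (f : G →+ G') {H K : AddSubgroup G} (hHK : H ≤ K) (hf : ∀ x ∈ K, f x = 0 → x = 0)
    (hH : (H.map f).index ≠ 0) : H.relIndex K ≤ (H.map f).index := by
  have hHf : (H ⊔ f.ker) ⊓ K = H := by
    refine le_antisymm (fun x ⟨hx, hxK⟩ => ?_) (le_inf le_sup_left hHK)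
    obtain ⟨y, hy, z, hz, rfl⟩ := AddSubgroup.mem_sup.mp hx
    rwa [hf z (by simpa using K.sub_mem hxK (hHK hy)) hz, add_zero]
  calc H.relIndex K = ((H ⊔ f.ker) ⊓ K).relIndex K := by rw [hHf]
    _ = (H.map f).relIndex (K.map f) := by
        rw [AddSubgroup.inf_relIndex_right, ← AddSubgroup.relIndex_comap,
          AddSubgroup.comap_map_eq]
    _ ≤ (H.map f).index := by
        rw [← AddSubgroup.relIndex_top_right] at hH ⊢
        exact AddSubgroup.relIndex_le_of_le_right le_top hH

variable {ι : Type*} [Fintype ι]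

theorem subgroupDet_le_factorial_mul_pow {r : ℕ} (L : AddSubgroup (ι → ℤ))
    (v : Fin r → ι → ℤ) (hvL : ∀ j, v j ∈ L) (hv : LinearIndependent ℚ fun j => ((↑) ∘ v j : ι → ℚ))
    (hLv : ∀ x ∈ L,
      ((↑) ∘ x : ι → ℚ) ∈ Submodule.span ℚ (Set.range fun j => ((↑) ∘ v j : ι → ℚ)))
    {B : ℕ} (hB : ∀ j i, (v j i).natAbs ≤ B) : subgroupDet L ≤ r ! * B ^ r := by
  classical
  let N : Matrix ι (Fin r) ℤ := Matrix.of fun i j => v j i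
  obtain ⟨k, hk⟩ := (N.map ((↑) : ℤ → ℚ)).exists_submatrix_det_ne_zero hv
  let D : Matrix (Fin r) (Fin r) ℤ := N.submatrix k id
  have hD : D.det ≠ 0 := fun h => hk (by rw [submatrix_map, ← Int.cast_det, h, Int.cast_zero])
  let p : (ι → ℤ) →+ (Fin r → ℤ) := (LinearMap.funLeft ℤ ℤ k).toAddMonoidHom
  have hp : ∀ x ∈ isolator L, p x = 0 → x = 0 := fun x hx hpx => by
    have := (N.map ((↑) : ℤ → ℚ)).eq_zero_of_mem_span_col_of_comp_eq_zero hk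
      (map_mem_of_mem_isolator ((Int.castAddHom ℚ).compLeft ι) hLv hx)
      (funext fun a => by
        have : x (k a) = 0 := congrFun hpx a
        simp [this])
    exact funext fun i => by simpa using congrFun this i
  have hdvd : (L.map p).index ∣ D.det.natAbs :=
    AddSubgroup.index_dvd_natAbs_det D hD fun j => AddSubgroup.mem_map_of_mem p (hvL j)
  have hne : D.det.natAbs ≠ 0 := Int.natAbs_ne_zero.mpr hD
  calc subgroupDet L ≤ (L.map p).index :=
        AddSubgroup.relIndex_le_index_map p (le_isolator L) hp (ne_zero_of_dvd_ne_zero hne hdvd)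
    _ ≤ D.det.natAbs := Nat.le_of_dvd (Nat.pos_of_ne_zero hne) hdvd
    _ ≤ r ! * B ^ r := by
        simpa using D.natAbs_det_le fun a j => hB j (k a)

end Lattice

theorem exists_addMonoidHom_finite_ker [Module.Finite ℤ A] :
    ∃ (n : ℕ) (π : A →+ (Fin n → ℤ)), Finite π.ker := by
  have := isNoetherian_of_isNoetherianRing_of_finite ℤ A
  let T := Submodule.torsion ℤ A
  let b := (Free.chooseBasis ℤ (A ⧸ T)).reindex (Fintype.equivFin _)
  let π := b.equivFun.toLinearMap ∘ₗ T.mkQ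
  have hker : LinearMap.ker π = T := by
    rw [LinearMap.ker_comp, LinearEquiv.ker, Submodule.comap_bot, Submodule.ker_mkQ]
  have : Module.Finite ℤ T := Module.Finite.iff_fg.mpr (IsNoetherian.noetherian T)
  have : Finite T := Module.finite_of_fg_torsion T Submodule.torsion_isTorsion
  have : Finite (LinearMap.ker π) := by rw [hker]; exact this
  exact ⟨_, π.toAddMonoidHom, this⟩

theorem exists_fin_linearIndependent_span_eq {K V s : Type*} [DivisionRing K] [AddCommGroup V]
    [Module K V] [Finite s] (u : s → V) :
    ∃ (r : ℕ) (a : Fin r → s), LinearIndependent K (u ∘ a) ∧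
      Submodule.span K (Set.range (u ∘ a)) = Submodule.span K (Set.range u) := by
  obtain ⟨κ, a, ha, hspan, hind⟩ := exists_linearIndependent' K u
  have : Finite κ := Finite.of_injective a ha
  let e := Finite.equivFin κ
  refine ⟨_, a ∘ e.symm, hind.comp _ e.symm.injective, ?_⟩
  rw [← hspan, ← Function.comp_assoc, EquivLike.range_comp]

theorem exists_subgroupDet_map_le {ι : Type*} [Fintype ι] (π : A →+ (ι → ℤ))
    (X : Finset A) {B : ℕ} (hB : ∀ x ∈ X, ∀ i, (π x i).natAbs ≤ B) :
    ∃ r ≤ subgroupRank (AddSubgroup.closure (X : Set A)), r ≤ Fintype.card ι ∧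
      subgroupDet ((AddSubgroup.closure (X : Set A)).map π) ≤ r ! * B ^ r := by
  set H := AddSubgroup.closure (X : Set A)
  let castπ : A →+ (ι → ℚ) := ((Int.castAddHom ℚ).compLeft ι).comp π
  let u : X → ι → ℚ := fun x => castπ x
  obtain ⟨r, a, hind, hspan⟩ := exists_fin_linearIndependent_span_eq (K := ℚ) u
  have : Module.Finite ℤ H :=
    Module.Finite.iff_addGroup_fg.mpr ((AddGroup.fg_iff_addSubgroup_fg H).mpr ⟨X, rfl⟩)
  have hrank : r ≤ subgroupRank H := by
    simpa [subgroupRank] using card_le_finrank_rat_tensor (castπ.comp H.subtype)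
      (fun j => ⟨a j, AddSubgroup.subset_closure (a j).2⟩) hind
  have hcard : r ≤ Fintype.card ι := by
    simpa using hind.fintype_card_le_finrank
  have hspanH : H ≤ (Submodule.span ℚ (Set.range (u ∘ a))).toAddSubgroup.comap castπ := by
    rw [hspan, AddSubgroup.closure_le]
    exact fun x hx => Submodule.subset_span ⟨⟨x, hx⟩, rfl⟩
  refine ⟨r, hrank, hcard, subgroupDet_le_factorial_mul_pow (H.map π) (fun j => π (a j))
    (fun j => AddSubgroup.mem_map_of_mem π (AddSubgroup.subset_closure (a j).2)) hind ?_
    (fun j i => hB _ (a j).2 i)⟩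
  rintro _ ⟨x, hx, rfl⟩
  exact hspanH hx

theorem subgroupRank_eq_zero_of_subgroupNorm_eq_zero {S : Set A}
    (hS : AddSubgroup.closure S = ⊤) {H : AddSubgroup A} (hH : H.FG)
    (h : subgroupNorm S H = 0) : subgroupRank H = 0 := by
  obtain ⟨X, rfl, hX⟩ := exists_finset_closure_eq_forall_wordLength_le (S := S) hH
  rw [AddSubgroup.closure_eq_bot_iff.mpr fun x hx => eq_zero_of_wordLength_eq_zero
    (hS ▸ AddSubgroup.mem_top x) (Nat.eq_zero_of_le_zero (h ▸ hX x hx)), subgroupRank_bot]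

theorem exists_subgroupDet_le_mul_pow [Module.Finite ℤ A] {S : Set A}
    (hS : AddSubgroup.closure S = ⊤) {n : ℕ} (π : A →+ (Fin n → ℤ)) [Finite π.ker]
    {c : ℕ} (hc : ∀ s ∈ S, ∀ i, (π s i).natAbs ≤ c) (H : AddSubgroup A) :
    ∃ r ≤ subgroupRank H, r ≤ n ∧
      subgroupDet H ≤ Nat.card π.ker * (r ! * (c * subgroupNorm S H) ^ r) := by
  obtain ⟨X, rfl, hX⟩ :=
    exists_finset_closure_eq_forall_wordLength_le (S := S) H.fg_of_moduleFinite
  obtain ⟨r, hrH, hrn, hdet⟩ := exists_subgroupDet_map_le π X fun x hx i =>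
    (natAbs_le_wordLength_mul ((Pi.evalAddMonoidHom _ i).comp π) (fun s hs => hc s hs i)
      (hS ▸ AddSubgroup.mem_top x)).trans (Nat.mul_le_mul_left c (hX x hx))
  refine ⟨r, hrH, by simpa using hrn, ?_⟩
  exact (subgroupDet_le_card_ker_mul π _ (subgroupDet_ne_zero _)).trans
    (Nat.mul_le_mul_left _ hdet)

theorem mul_pow_le_succ_pow_mul_pow {c m r n k : ℕ} (hrn : r ≤ n) (hrk : r ≤ k)
    (hm : m = 0 → k = 0) : (c * m) ^ r ≤ (c + 1) ^ n * m ^ k := by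
  rcases Nat.eq_zero_or_pos m with rfl | hpos
  · simp [hm rfl, Nat.le_zero.mp (hm rfl ▸ hrk), Nat.one_le_pow]
  · rw [mul_pow]
    exact Nat.mul_le_mul ((Nat.pow_le_pow_left c.le_succ r).trans
      (Nat.pow_le_pow_right c.succ_pos hrn)) (Nat.pow_le_pow_right hpos hrk)

theorem det_bound_by_norm (A : Type*) [AddCommGroup A] (S : Finset A)
    (hS : AddSubgroup.closure (S : Set A) = ⊤) :
    ∃ C : ℝ, 0 < C ∧ ∀ H : AddSubgroup A,
      (subgroupDet H : ℝ) ≤ C * (subgroupNorm (S : Set A) H : ℝ) ^ subgroupRank H := by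
  have : Module.Finite ℤ A := Module.Finite.iff_addGroup_fg.mpr ⟨⟨S, hS⟩⟩
  obtain ⟨n, π, _⟩ := exists_addMonoidHom_finite_ker (A := A)
  let c := S.sup fun s => Finset.univ.sup fun i => (π s i).natAbs
  have hc : ∀ s ∈ (S : Set A), ∀ i, (π s i).natAbs ≤ c := fun s hs i =>
    Finset.le_sup_of_le hs (Finset.le_sup (f := fun i => (π s i).natAbs) (Finset.mem_univ i))
  have hC : 0 < Nat.card π.ker * n ! * (c + 1) ^ n := by
    have := Nat.card_pos (α := π.ker)
    positivity
  refine ⟨(Nat.card π.ker * n ! * (c + 1) ^ n : ℕ), by exact_mod_cast hC, fun H => ?_⟩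
  obtain ⟨r, hrH, hrn, hdet⟩ := exists_subgroupDet_le_mul_pow hS π hc H
  have hpow := mul_pow_le_succ_pow_mul_pow (c := c) hrn hrH
    (subgroupRank_eq_zero_of_subgroupNorm_eq_zero hS H.fg_of_moduleFinite)
  have key : subgroupDet H ≤
      Nat.card π.ker * n ! * (c + 1) ^ n * subgroupNorm (S : Set A) H ^ subgroupRank H :=
    calc subgroupDet H ≤ Nat.card π.ker * (r ! * (c * subgroupNorm (S : Set A) H) ^ r) := hdet
      _ ≤ Nat.card π.ker * (n ! * ((c + 1) ^ n * subgroupNorm (S : Set A) H ^ subgroupRank H)) :=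
          Nat.mul_le_mul_left _ (Nat.mul_le_mul (Nat.factorial_le hrn) hpow)
      _ = _ := by ring
  exact_mod_cast key
end

section
/- Let S be a generating set of ℤ^k (say the standard basis). There exists C > 0 such that for every injective linear map φ : ℤ^k → ℤ^k and every x ∈ ℤ^k, ‖x‖_S ≤ C · (max{‖φ‖_S, ‖φ(x)‖_S})^k / |det(φ)|, where ‖φ‖_S = max_{s∈S} ‖φ(s)‖_S. -/
/-- The ℓ¹-norm (word norm with respect to the standard generating set) on `ℤ^k`. -/
def l1Norm {k : ℕ} (x : Fin k → ℤ) : ℕ := ∑ j, (x j).natAbs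

/-- The norm of a homomorphism `ℤ^k → ℤ^k` with respect to the standard generating
set: the maximum of the norms of the images of the standard basis vectors. -/
def stdNorm {k : ℕ} (φ : (Fin k → ℤ) →ₗ[ℤ] (Fin k → ℤ)) : ℕ :=
  Finset.univ.sup fun i => l1Norm (φ (Pi.single i 1))

/-!
The entries of the matrix `A` of `φ` are bounded by `M = max ‖φ‖ ‖φ x‖`, so each entry of
`adj A`, being a `(k-1) × (k-1)` minor, is at most `(k-1)! M^(k-1)` in absolute value.
Cramer's rule `det A • x = adj A *ᵥ (A *ᵥ x)` then bounds each coordinate of `det A • x`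
by `(k-1)! M^(k-1) ‖φ x‖ ≤ (k-1)! M^k`, and summing the `k` coordinates gives `C = k!`.
-/

open Matrix

section CramerBound

variable {R : Type*} [CommRing R] [LinearOrder R] [IsStrictOrderedRing R]

theorem Matrix.abs_adjugate_apply_le {n : ℕ} {A : Matrix (Fin (n + 1)) (Fin (n + 1)) R} {M : R}
    (hA : ∀ i j, |A i j| ≤ M) (i j : Fin (n + 1)) :
    |A.adjugate i j| ≤ n.factorial * M ^ n := by
  rw [adjugate_fin_succ_eq_det_submatrix, abs_mul, abs_pow, abs_neg, abs_one, one_pow, one_mul]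
  simpa [nsmul_eq_mul] using det_le (A := A.submatrix j.succAbove i.succAbove)
    (abv := AbsoluteValue.abs) fun i' j' => hA (j.succAbove i') (i.succAbove j')

theorem Matrix.abs_det_mul_abs_le {n : ℕ} {A : Matrix (Fin (n + 1)) (Fin (n + 1)) R} {M : R}
    (hA : ∀ i j, |A i j| ≤ M) (x : Fin (n + 1) → R) (i : Fin (n + 1)) :
    |A.det| * |x i| ≤ n.factorial * M ^ n * ∑ j, |(A *ᵥ x) j| := by
  have cramer : A.det * x i = ∑ j, A.adjugate i j * (A *ᵥ x) j := by
    have : A.adjugate *ᵥ (A *ᵥ x) = A.det • x := by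
      rw [mulVec_mulVec, adjugate_mul, smul_mulVec, one_mulVec]
    simpa [mulVec, dotProduct] using (congrFun this i).symm
  calc |A.det| * |x i| = |∑ j, A.adjugate i j * (A *ᵥ x) j| := by rw [← abs_mul, cramer]
    _ ≤ ∑ j, |A.adjugate i j| * |(A *ᵥ x) j| := by
      simpa only [abs_mul] using
        Finset.abs_sum_le_sum_abs (fun j => A.adjugate i j * (A *ᵥ x) j) _
    _ ≤ ∑ j, n.factorial * M ^ n * |(A *ᵥ x) j| := by
      gcongr with j
      exact abs_adjugate_apply_le hA i j
    _ = n.factorial * M ^ n * ∑ j, |(A *ᵥ x) j| := by rw [Finset.mul_sum]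

theorem Matrix.abs_det_mul_sum_abs_le {k : ℕ} {A : Matrix (Fin k) (Fin k) R} {M : R}
    (hA : ∀ i j, |A i j| ≤ M) {x : Fin k → R} (hAx : ∑ j, |(A *ᵥ x) j| ≤ M) :
    |A.det| * ∑ i, |x i| ≤ k.factorial * M ^ k := by
  rcases k with _ | n
  · simp
  have hM : 0 ≤ M := (abs_nonneg _).trans (hA 0 0)
  calc |A.det| * ∑ i, |x i| = ∑ i, |A.det| * |x i| := Finset.mul_sum _ _ _
    _ ≤ ∑ _i : Fin (n + 1), n.factorial * M ^ n * M := by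
      refine Finset.sum_le_sum fun i _ => (abs_det_mul_abs_le hA x i).trans ?_
      exact mul_le_mul_of_nonneg_left hAx (by positivity)
    _ = (n + 1).factorial * M ^ (n + 1) := by
      simp only [Finset.sum_const, Finset.card_univ, Fintype.card_fin, nsmul_eq_mul,
        Nat.factorial_succ]
      push_cast
      ring

end CramerBound

theorem natCast_l1Norm {k : ℕ} (x : Fin k → ℤ) : (l1Norm x : ℤ) = ∑ j, |x j| := by
  simp [l1Norm]

theorem abs_toMatrix'_apply_le_stdNorm {k : ℕ} (φ : (Fin k → ℤ) →ₗ[ℤ] (Fin k → ℤ))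
    (i j : Fin k) : |LinearMap.toMatrix' φ i j| ≤ stdNorm φ := by
  rw [LinearMap.toMatrix'_apply, ← Int.natCast_natAbs, Nat.cast_le]
  calc (φ (Pi.single j 1) i).natAbs ≤ l1Norm (φ (Pi.single j 1)) :=
        Finset.single_le_sum (f := fun i => (φ (Pi.single j 1) i).natAbs)
          (fun _ _ => Nat.zero_le _) (Finset.mem_univ i)
    _ ≤ stdNorm φ :=
      Finset.le_sup (f := fun j => l1Norm (φ (Pi.single j 1))) (Finset.mem_univ j)

theorem cramer_word_length_bound (k : ℕ) :
    ∃ C : ℝ, 0 < C ∧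
      ∀ φ : (Fin k → ℤ) →ₗ[ℤ] (Fin k → ℤ), Function.Injective φ →
        ∀ x : Fin k → ℤ,
          (l1Norm x : ℝ) ≤
            C * (max (stdNorm φ) (l1Norm (φ x)) : ℝ) ^ k / |((LinearMap.det φ : ℤ) : ℝ)| := by
  refine ⟨k.factorial, by positivity, fun φ hφ x => ?_⟩
  have hdet : LinearMap.det φ ≠ 0 := fun h =>
    LinearMap.det_eq_zero_iff_ker_ne_bot.mp h (LinearMap.ker_eq_bot.mpr hφ)
  have key : |LinearMap.det φ| * l1Norm x ≤
      k.factorial * (max (stdNorm φ) (l1Norm (φ x)) : ℤ) ^ k := by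
    rw [← LinearMap.det_toMatrix', natCast_l1Norm]
    refine abs_det_mul_sum_abs_le (fun i j => ?_) ?_
    · exact (abs_toMatrix'_apply_le_stdNorm φ i j).trans (le_max_left _ _)
    · rw [LinearMap.toMatrix'_mulVec, ← natCast_l1Norm]
      exact le_max_right _ _
  rw [le_div_iff₀ (by positivity), mul_comm]
  exact_mod_cast key
end

section
/- Let H_3(ℤ) be the integral Heisenberg group with presentation ⟨x, y, z | [x,y]=z, z central⟩, let p be a prime, and let π : H_3(ℤ) → Q be a surjective homomorphism onto a finite q-group for a prime q ≠ p. Then for every natural number m, the elements π(x^p) and π(x^p z^m) are conjugate in Q. -/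
/-- The discrete Heisenberg group `H₃(ℤ)`, realized as triples `(a, b, c)` of
integers, corresponding to the unitriangular matrix `[[1, a, c], [0, 1, b], [0, 0, 1]]`. -/
@[ext]
structure Heisenberg where
  a : ℤ
  b : ℤ
  c : ℤ

namespace Heisenberg

instance : Mul Heisenberg :=
  ⟨fun p q => ⟨p.a + q.a, p.b + q.b, p.c + q.c + p.a * q.b⟩⟩

instance : One Heisenberg := ⟨⟨0, 0, 0⟩⟩

instance : Inv Heisenberg := ⟨fun p => ⟨-p.a, -p.b, p.a * p.b - p.c⟩⟩

@[simp] lemma mul_a (p q : Heisenberg) : (p * q).a = p.a + q.a := rfl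
@[simp] lemma mul_b (p q : Heisenberg) : (p * q).b = p.b + q.b := rfl
@[simp] lemma mul_c (p q : Heisenberg) : (p * q).c = p.c + q.c + p.a * q.b := rfl
@[simp] lemma one_a : (1 : Heisenberg).a = 0 := rfl
@[simp] lemma one_b : (1 : Heisenberg).b = 0 := rfl
@[simp] lemma one_c : (1 : Heisenberg).c = 0 := rfl
@[simp] lemma inv_a (p : Heisenberg) : p⁻¹.a = -p.a := rfl
@[simp] lemma inv_b (p : Heisenberg) : p⁻¹.b = -p.b := rfl
@[simp] lemma inv_c (p : Heisenberg) : p⁻¹.c = p.a * p.b - p.c := rfl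

instance : Group Heisenberg where
  mul_assoc p q r := by ext <;> simp <;> ring
  one_mul p := by ext <;> simp
  mul_one p := by ext <;> simp
  inv_mul_cancel p := by ext <;> simp

/-- The generator `x`. -/
def x : Heisenberg := ⟨1, 0, 0⟩

/-- The generator `y`. -/
def y : Heisenberg := ⟨0, 1, 0⟩

/-- The central element `z = [x, y]`. -/
def z : Heisenberg := ⟨0, 0, 1⟩

end Heisenberg

/-!
Conjugating `x ^ p` by `y⁻ᵗ` gives `x ^ p * z ^ (p * t)`. Since `q ≠ p`, the order of `π z`
(a power of `q`) is prime to `p`, so `π z ^ m` is a power of `π z ^ p`, and `π (x ^ p * z ^ m)`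
is the image of such a conjugate.
-/

namespace Heisenberg

lemma x_pow (n : ℕ) : x ^ n = ⟨n, 0, 0⟩ := by
  induction n with
  | zero => rfl
  | succ k ih => rw [pow_succ, ih]; ext <;> simp [x]

lemma y_pow (n : ℕ) : y ^ n = ⟨0, n, 0⟩ := by
  induction n with
  | zero => rfl
  | succ k ih => rw [pow_succ, ih]; ext <;> simp [y]

lemma z_pow (n : ℕ) : z ^ n = ⟨0, 0, n⟩ := by
  induction n with
  | zero => rfl
  | succ k ih => rw [pow_succ, ih]; ext <;> simp [z]

lemma isConj_x_pow_x_pow_mul_z_pow (k t : ℕ) : IsConj (x ^ k) (x ^ k * z ^ (k * t)) :=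
  isConj_iff.2 ⟨(y ^ t)⁻¹, by
    rw [x_pow, y_pow, z_pow]
    ext <;> simp⟩

end Heisenberg

theorem heisenberg_conj_in_coprime_quotient_general (p q : ℕ) (hp : p.Prime) (hq : q.Prime)
    (hpq : q ≠ p) (Q : Type*) [Group Q] (n : ℕ)
    (hcard : Nat.card Q = q ^ n) (π : Heisenberg →* Q) :
    ∀ m : ℕ, IsConj (π (Heisenberg.x ^ p)) (π (Heisenberg.x ^ p * Heisenberg.z ^ m)) := by
  intro m
  have hcop : p.Coprime (orderOf (π Heisenberg.z)) :=
    (((Nat.coprime_primes hp hq).2 hpq.symm).pow_right n).coprime_dvd_right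
      (hcard ▸ orderOf_dvd_natCard _)
  obtain ⟨s, hs⟩ := exists_pow_eq_self_of_coprime hcop
  have hzm : π Heisenberg.z ^ (p * (s * m)) = π Heisenberg.z ^ m := by
    rw [pow_mul, pow_mul, hs]
  simpa only [map_mul, map_pow, hzm] using
    π.map_isConj (Heisenberg.isConj_x_pow_x_pow_mul_z_pow p (s * m))

theorem heisenberg_conj_in_coprime_quotient (p q : ℕ) (hp : p.Prime) (hq : q.Prime)
    (hpq : q ≠ p) (Q : Type*) [Group Q] [Finite Q] (n : ℕ)
    (hcard : Nat.card Q = q ^ n) (π : Heisenberg →* Q)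
    (hsurj : Function.Surjective π) :
    ∀ m : ℕ, IsConj (π (Heisenberg.x ^ p)) (π (Heisenberg.x ^ p * Heisenberg.z ^ m)) :=
  heisenberg_conj_in_coprime_quotient_general p q hp hq hpq Q n hcard π
end

section
/- Let G be a group containing a finite-index characteristic subgroup H with right coset representatives s_1, …, s_r (r = [G:H]). Fix φ ∈ Aut(G) with restriction φ̄ ∈ Aut(H), and x ∈ G. Set x_i = s_i · x · φ(s_i)⁻¹ and let f_{x,i} be conjugation by x_i restricted to H. Then the φ-twisted conjugacy class of x decomposes as [x]_φ = ⋃_{i=1}^r [1_H]_{f_{x,i} ∘ φ̄} · x_i, where [1_H]_{ψ} = { z·ψ(z)⁻¹ : z ∈ H }. -/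
/-!
Write `y ∈ G` as `y = z * s i` with `z ∈ H`. Then `y * x * φ(y)⁻¹ = z * xᵢ * φ(z)⁻¹` with
`xᵢ = s i * x * φ(s i)⁻¹`, and `z * xᵢ * φ(z)⁻¹ = z * ψ(z)⁻¹ * xᵢ` for `ψ(h) = xᵢ * φ(h) * xᵢ⁻¹`.
Conversely every `z * ψ(z)⁻¹ * xᵢ` is the twisted conjugate of `x` by `z * s i`.
-/

section TwistedConjugacy

variable {G F : Type*} [Group G] [FunLike F G G] [MonoidHomClass F G G]

theorem mul_mul_mul_inv_map_mul (φ : F) (x z s : G) :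
    z * s * x * (φ (z * s))⁻¹ =
      z * ((s * x * (φ s)⁻¹) * φ z * (s * x * (φ s)⁻¹)⁻¹)⁻¹ * (s * x * (φ s)⁻¹) := by
  simp only [map_mul]
  group

theorem setOf_twisted_conj_eq_iUnion {ι : Type*} (H : Subgroup G) (s : ι → G)
    (hcos : ∀ g : G, ∃ i, g * (s i)⁻¹ ∈ H) (φ : F) (x : G) :
    {w : G | ∃ y : G, y * x * (φ y)⁻¹ = w} =
      ⋃ i, {w : G | ∃ z ∈ H,
        w = z * ((s i * x * (φ (s i))⁻¹) * φ z * (s i * x * (φ (s i))⁻¹)⁻¹)⁻¹ *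
          (s i * x * (φ (s i))⁻¹)} := by
  ext w
  simp only [Set.mem_ofPred_eq, Set.mem_iUnion]
  constructor
  · rintro ⟨y, rfl⟩
    obtain ⟨i, hi⟩ := hcos y
    refine ⟨i, y * (s i)⁻¹, hi, ?_⟩
    rw [← mul_mul_mul_inv_map_mul, inv_mul_cancel_right]
  · rintro ⟨i, z, -, rfl⟩
    exact ⟨z * s i, mul_mul_mul_inv_map_mul φ x z (s i)⟩

end TwistedConjugacy

theorem twisted_conjugacy_class_decomposition_general (G : Type*) [Group G]
    (H : Subgroup G) (r : ℕ)
    (s : Fin r → G) (hcos : ∀ g : G, ∃ i : Fin r, g * (s i)⁻¹ ∈ H)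
    (φ : G ≃* G) (x : G) :
    {w : G | ∃ y : G, y * x * (φ y)⁻¹ = w} =
      ⋃ i : Fin r,
        {w : G | ∃ z ∈ H,
          w = z * ((s i * x * (φ (s i))⁻¹) * φ z * (s i * x * (φ (s i))⁻¹)⁻¹)⁻¹ *
            (s i * x * (φ (s i))⁻¹)} :=
  setOf_twisted_conj_eq_iUnion H s hcos φ x

theorem twisted_conjugacy_class_decomposition (G : Type*) [Group G]
    (H : Subgroup G) [H.Characteristic] (r : ℕ) (hr : H.index = r) (hrpos : 0 < r)
    (s : Fin r → G) (hcos : ∀ g : G, ∃ i : Fin r, g * (s i)⁻¹ ∈ H)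
    (φ : G ≃* G) (x : G) :
    {w : G | ∃ y : G, y * x * (φ y)⁻¹ = w} =
      ⋃ i : Fin r,
        {w : G | ∃ z ∈ H,
          w = z * ((s i * x * (φ (s i))⁻¹) * φ z * (s i * x * (φ (s i))⁻¹)⁻¹)⁻¹ *
            (s i * x * (φ (s i))⁻¹)} :=
  twisted_conjugacy_class_decomposition_general G H r s hcos φ x
end
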